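/- The double integral ∫_0^∞ ∫_0^∞ (t s)^{-1/2} e^{-|t^{3/2} - s^{3/2}|} dt ds is finite. -/

import Mathlib

/-!
Split the quadrant at `1`. Where one variable, by symmetry `t`, is at most `1`, we have
`t^{3/2} ≤ 1`, so the integrand is at most `e · t^{-1/2} · s^{-1/2} e^{-s^{3/2}}`, a product of
integrable functions. On `(1, ∞)²` write `t = x²`, `s = y²`: then `|x³ - y³| ≥ x |x² - y²|` and
`y⁻¹ ≤ (1 + |x² - y²|) x⁻¹`, and absorbing the factor `1 + |x² - y²|` into half of the
exponential bounds the integrand by `2 t⁻¹ exp(-√t |t - s| / 2)`. Its integral in `s` is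
`8 t^{-3/2}`, which is integrable on `(1, ∞)`.
-/

open MeasureTheory Real Set

noncomputable def kernel (p : ℝ × ℝ) : ℝ :=
  (p.1 * p.2) ^ (-(1:ℝ)/2) * exp (-|p.1 ^ ((3:ℝ)/2) - p.2 ^ ((3:ℝ)/2)|)

lemma measurable_kernel : Measurable kernel := by
  unfold kernel
  fun_prop

lemma kernel_swap (p : ℝ × ℝ) : kernel p.swap = kernel p := by
  rw [kernel, kernel, Prod.fst_swap, Prod.snd_swap, mul_comm p.2, abs_sub_comm]

lemma kernel_nonneg {t s : ℝ} (ht : 0 ≤ t) (hs : 0 ≤ s) : 0 ≤ kernel (t, s) := by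
  unfold kernel
  positivity

lemma sq_rpow {x : ℝ} (hx : 0 ≤ x) (r : ℝ) : (x ^ 2) ^ r = x ^ (2 * r) := by
  rw [← rpow_natCast_mul hx]
  norm_num

lemma kernel_sq {x y : ℝ} (hx : 0 ≤ x) (hy : 0 ≤ y) :
    kernel (x ^ 2, y ^ 2) = (x * y)⁻¹ * exp (-|x ^ 3 - y ^ 3|) := by
  rw [kernel, ← mul_pow, sq_rpow (mul_nonneg hx hy), sq_rpow hx, sq_rpow hy]
  norm_num [rpow_neg_one]

lemma integrable_exp_neg_mul_abs {c : ℝ} (hc : 0 < c) :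
    Integrable fun x : ℝ => exp (-(c * |x|)) := by
  rw [← integrableOn_univ, ← Iic_union_Ioi (a := 0)]
  refine ((integrableOn_exp_mul_Iic hc 0).congr_fun (fun x hx => ?_) measurableSet_Iic).union
    ((integrableOn_exp_mul_Ioi (neg_lt_zero.2 hc) 0).congr_fun (fun x hx => ?_) measurableSet_Ioi)
  · rw [abs_of_nonpos hx, mul_neg, neg_neg]
  · simp only [abs_of_pos (mem_Ioi.1 hx), neg_mul]

lemma integral_exp_neg_mul_abs {c : ℝ} (hc : 0 < c) : ∫ x : ℝ, exp (-(c * |x|)) = 2 / c := by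
  rw [integral_comp_abs (f := fun x => exp (-(c * x)))]
  simp_rw [← neg_mul]
  rw [integral_exp_mul_Ioi (neg_lt_zero.2 hc)]
  field_simp
  simp

lemma integrableOn_rpow_mul_exp_neg_mul_rpow_mul_abs_sub {a b c : ℝ} (hab : a - b < -1)
    (hc : 0 < c) :
    IntegrableOn (fun p : ℝ × ℝ => p.1 ^ a * exp (-(c * p.1 ^ b * |p.1 - p.2|)))
      (Ioi 1 ×ˢ univ) := by
  rw [IntegrableOn, Measure.volume_eq_prod, ← Measure.prod_restrict, Measure.restrict_univ,
    integrable_prod_iff (by fun_prop)]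
  constructor
  · filter_upwards [ae_restrict_mem measurableSet_Ioi] with t ht
    have hct : 0 < c * t ^ b := mul_pos hc (rpow_pos_of_pos (one_pos.trans ht) b)
    exact ((integrable_exp_neg_mul_abs hct).comp_sub_left t).const_mul _
  · refine ((integrableOn_Ioi_rpow_of_lt hab one_pos).const_mul (2 / c)).congr ?_
    filter_upwards [ae_restrict_mem measurableSet_Ioi] with t ht
    have ht0 : 0 < t := one_pos.trans ht
    have hct : 0 < c * t ^ b := mul_pos hc (rpow_pos_of_pos ht0 b)
    simp only [norm_mul, norm_of_nonneg (rpow_nonneg ht0.le _), norm_of_nonneg (exp_pos _).le]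
    rw [integral_const_mul, integral_sub_left_eq_self (fun x => exp (-(c * t ^ b * |x|))),
      integral_exp_neg_mul_abs hct, rpow_sub ht0]
    field_simp

lemma kernel_le_of_le_one {t s : ℝ} (ht : 0 < t) (ht1 : t ≤ 1) (hs : 0 < s) :
    kernel (t, s) ≤ exp 1 * t ^ (-(1:ℝ)/2) * (s ^ (-(1:ℝ)/2) * exp (-s ^ ((3:ℝ)/2))) := by
  have hexp : exp (-|t ^ ((3:ℝ)/2) - s ^ ((3:ℝ)/2)|) ≤ exp 1 * exp (-s ^ ((3:ℝ)/2)) := by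
    rw [← exp_add, exp_le_exp]
    linarith [neg_abs_le (t ^ ((3:ℝ)/2) - s ^ ((3:ℝ)/2)),
      rpow_le_one ht.le ht1 (by norm_num : (0:ℝ) ≤ 3/2)]
  calc kernel (t, s)
      = t ^ (-(1:ℝ)/2) * s ^ (-(1:ℝ)/2) * exp (-|t ^ ((3:ℝ)/2) - s ^ ((3:ℝ)/2)|) := by
        rw [kernel, mul_rpow ht.le hs.le]
    _ ≤ t ^ (-(1:ℝ)/2) * s ^ (-(1:ℝ)/2) * (exp 1 * exp (-s ^ ((3:ℝ)/2))) := by gcongr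
    _ = _ := by ring

lemma inv_mul_exp_neg_abs_cube_sub_le {x y : ℝ} (hx : 1 ≤ x) (hy : 1 ≤ y) :
    (x * y)⁻¹ * exp (-|x ^ 3 - y ^ 3|) ≤ 2 * ((x ^ 2)⁻¹ * exp (-(1/2 * x * |x ^ 2 - y ^ 2|))) := by
  set w := |x ^ 2 - y ^ 2| with hw
  have hw0 : 0 ≤ w := abs_nonneg _
  have hsq : w = |x - y| * (x + y) := by
    rw [hw, show x ^ 2 - y ^ 2 = (x - y) * (x + y) by ring, abs_mul,
      abs_of_pos (a := x + y) (by linarith)]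
  have hcube : x * w ≤ |x ^ 3 - y ^ 3| := by
    rw [show x ^ 3 - y ^ 3 = (x - y) * (x ^ 2 + x * y + y ^ 2) by ring, abs_mul,
      abs_of_pos (a := x ^ 2 + x * y + y ^ 2) (by positivity), hsq]
    nlinarith [abs_nonneg (x - y)]
  have hxy : x ≤ (1 + w) * y := by
    rw [hsq]
    nlinarith [le_abs_self (x - y), abs_nonneg (x - y)]
  have hyx : y⁻¹ ≤ (1 + w) * x⁻¹ := by
    rwa [← div_eq_mul_inv, le_div_iff₀ (by linarith), inv_mul_eq_div, div_le_iff₀ (by linarith)]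
  have hpoly : 1 + w ≤ 2 * exp (1/2 * x * w) := by
    nlinarith [add_one_le_exp (1/2 * x * w)]
  calc (x * y)⁻¹ * exp (-|x ^ 3 - y ^ 3|)
      ≤ (x * y)⁻¹ * exp (-(x * w)) := by gcongr
    _ = x⁻¹ * y⁻¹ * exp (-(x * w)) := by rw [mul_inv]
    _ ≤ x⁻¹ * ((1 + w) * x⁻¹) * exp (-(x * w)) := by gcongr
    _ ≤ x⁻¹ * (2 * exp (1/2 * x * w) * x⁻¹) * exp (-(x * w)) := by gcongr
    _ = 2 * ((x ^ 2)⁻¹ * exp (-(1/2 * x * w))) := by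
        rw [show -(1/2 * x * w) = 1/2 * x * w + -(x * w) by ring, exp_add]
        ring

lemma kernel_le_of_one_le {t s : ℝ} (ht : 1 ≤ t) (hs : 1 ≤ s) :
    kernel (t, s) ≤ 2 * (t ^ (-1:ℝ) * exp (-(1/2 * t ^ (1/2:ℝ) * |t - s|))) := by
  obtain ⟨x, hx0, rfl⟩ : ∃ x, 0 ≤ x ∧ x ^ 2 = t := ⟨√t, sqrt_nonneg t, sq_sqrt (by linarith)⟩
  obtain ⟨y, hy0, rfl⟩ : ∃ y, 0 ≤ y ∧ y ^ 2 = s := ⟨√s, sqrt_nonneg s, sq_sqrt (by linarith)⟩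
  have hx : 1 ≤ x := by nlinarith
  have hy : 1 ≤ y := by nlinarith
  rw [rpow_neg_one, ← sqrt_eq_rpow, sqrt_sq hx0, kernel_sq hx0 hy0]
  exact inv_mul_exp_neg_abs_cube_sub_le hx hy

lemma integrableOn_kernel_of_le {s : Set (ℝ × ℝ)} (hs : MeasurableSet s)
    (hpos : s ⊆ Ioi 0 ×ˢ Ioi 0) {g : ℝ × ℝ → ℝ} (hg : IntegrableOn g s)
    (hle : ∀ p ∈ s, kernel p ≤ g p) : IntegrableOn kernel s := by
  refine hg.mono' measurable_kernel.aestronglyMeasurable ?_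
  filter_upwards [ae_restrict_mem hs] with p hp
  obtain ⟨ht, hs⟩ := hpos hp
  rw [norm_of_nonneg (kernel_nonneg (le_of_lt ht) (le_of_lt hs))]
  exact hle p hp

lemma integrableOn_kernel_Ioc_Ioi : IntegrableOn kernel (Ioc 0 1 ×ˢ Ioi 0) := by
  refine integrableOn_kernel_of_le (measurableSet_Ioc.prod measurableSet_Ioi)
    (prod_mono Ioc_subset_Ioi_self subset_rfl) ?_
    fun p ⟨⟨ht, ht1⟩, hs⟩ ↦ kernel_le_of_le_one ht ht1 hs
  have hrpow : IntegrableOn (fun t : ℝ => t ^ (-(1:ℝ)/2)) (Ioc 0 1) :=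
    (intervalIntegrable_iff_integrableOn_Ioc_of_le zero_le_one).1
      (intervalIntegral.intervalIntegrable_rpow' (by norm_num))
  rw [IntegrableOn, Measure.volume_eq_prod, ← Measure.prod_restrict]
  exact (hrpow.const_mul _).mul_prod
    (integrableOn_rpow_mul_exp_neg_rpow (by norm_num) (by norm_num))

lemma integrableOn_kernel_Ioi_one : IntegrableOn kernel (Ioi 1 ×ˢ Ioi 1) := by
  refine integrableOn_kernel_of_le (measurableSet_Ioi.prod measurableSet_Ioi)
    (prod_mono (Ioi_subset_Ioi zero_le_one) (Ioi_subset_Ioi zero_le_one)) ?_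
    fun p ⟨ht, hs⟩ ↦ kernel_le_of_one_le (le_of_lt ht) (le_of_lt hs)
  exact ((integrableOn_rpow_mul_exp_neg_mul_rpow_mul_abs_sub (by norm_num) (by norm_num)).mono_set
    (prod_mono subset_rfl (subset_univ _))).const_mul 2

/-- The double integral `∫_0^∞ ∫_0^∞ (t s)^{-1/2} e^{-|t^{3/2} - s^{3/2}|} dt ds` is finite. -/
theorem stmt3 :
    IntegrableOn
      (fun p : ℝ × ℝ =>
        (p.1 * p.2) ^ (-(1:ℝ)/2) * Real.exp (-|p.1 ^ ((3:ℝ)/2) - p.2 ^ ((3:ℝ)/2)|))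
      (Set.Ioi (0:ℝ) ×ˢ Set.Ioi (0:ℝ)) := by
  have hswap : IntegrableOn kernel (Ioi 0 ×ˢ Ioc 0 1) := by
    simpa only [Function.comp_def, kernel_swap, ← Measure.volume_eq_prod]
      using integrableOn_kernel_Ioc_Ioi.swap
  have hcover : Ioi (0:ℝ) ×ˢ Ioi (0:ℝ) ⊆
      (Ioc 0 1 ×ˢ Ioi 0 ∪ Ioi 0 ×ˢ Ioc 0 1) ∪ Ioi 1 ×ˢ Ioi 1 := by
    rintro ⟨t, s⟩ ⟨ht, hs⟩
    simp only [mem_union, mem_prod, mem_Ioc, mem_Ioi] at ht hs ⊢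
    rcases le_or_gt t 1 with ht1 | ht1 <;> rcases le_or_gt s 1 with hs1 | hs1 <;> simp_all
  exact ((integrableOn_kernel_Ioc_Ioi.union hswap).union integrableOn_kernel_Ioi_one).mono_set
    hcover
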